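/- arXiv:1710.02405 — 2 statements merged into one kernel-verified Lean document; each statement's English description precedes it below -/
import Mathlib

section
/- The tetrahedron graph K_4 (complete graph on 4 vertices, 6 edges) has the property that every automorphism induces an even permutation of its edge set; hence K_4 is a nonzero element in the vector space of edge-ordered graphs modulo the sign relations. -/
lemma K4_aux : ∀ p : Equiv.Perm (Fin 4),
    Equiv.Perm.sign (SimpleGraph.Iso.mapEdgeSet (SimpleGraph.Iso.completeGraph p)) = 1 := by
  decide

lemma K4_iso_eq (φ : (⊤ : SimpleGraph (Fin 4)) ≃g (⊤ : SimpleGraph (Fin 4))) :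
    φ = SimpleGraph.Iso.completeGraph φ.toEquiv := by
  ext v : 3
  rfl

/-- Every automorphism of the tetrahedron graph `K₄` induces an even
permutation of its 6 edges; hence no automorphism induces an odd edge permutation,
i.e. `K₄` is a nonzero element of the vector space of edge-ordered graphs modulo the
sign relations (where a graph is zero iff some automorphism induces an odd edge
permutation). -/
theorem K4_all_automorphisms_even :
    (∀ φ : (⊤ : SimpleGraph (Fin 4)) ≃g (⊤ : SimpleGraph (Fin 4)),
      Equiv.Perm.sign (SimpleGraph.Iso.mapEdgeSet φ) = 1) ∧
    ¬ ∃ φ : (⊤ : SimpleGraph (Fin 4)) ≃g (⊤ : SimpleGraph (Fin 4)),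
      Equiv.Perm.sign (SimpleGraph.Iso.mapEdgeSet φ) = -1 := by
  have h : ∀ φ : (⊤ : SimpleGraph (Fin 4)) ≃g (⊤ : SimpleGraph (Fin 4)),
      Equiv.Perm.sign (SimpleGraph.Iso.mapEdgeSet φ) = 1 := by
    intro φ
    rw [K4_iso_eq φ]
    exact K4_aux φ.toEquiv
  refine ⟨h, ?_⟩
  rintro ⟨φ, hφ⟩
  rw [h φ] at hφ
  exact absurd hφ (by decide)
end

section
/- The pentagon-wheel graph (5 rim vertices forming a 5-cycle, each joined to a common axis vertex; 6 vertices and 10 edges total) is not a zero graph: its automorphism group is the dihedral group of order 10 acting on the rim, and every automorphism induces an even permutation of the 10 edges. -/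
/-- Adjacency of the `m`-wheel: axis `none` joined to every rim vertex `some i`,
rim vertices `some i` forming an `m`-cycle. -/
def wheelAdj (m : ℕ) : Option (Fin m) → Option (Fin m) → Prop
  | none, none => False
  | none, some _ => True
  | some _, none => True
  | some i, some j => i ≠ j ∧ (((j : ℕ) = ((i : ℕ) + 1) % m) ∨ ((i : ℕ) = ((j : ℕ) + 1) % m))

instance wheelAdj.decidable (m : ℕ) : ∀ u v, Decidable (wheelAdj m u v) := fun u v => by
  cases u <;> cases v <;> dsimp [wheelAdj] <;> infer_instance

/-- The wheel graph with `m` rim vertices and one axis vertex. -/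
def wheel (m : ℕ) : SimpleGraph (Option (Fin m)) where
  Adj := wheelAdj m
  symm := by
    constructor
    rintro (_|i) (_|j) h
    · exact h.elim
    · trivial
    · trivial
    · exact ⟨h.1.symm, h.2.symm⟩
  loopless := by
    constructor
    rintro (_|i) h
    · exact h.elim
    · exact h.1 rfl

instance (m : ℕ) : DecidableRel (wheel m).Adj := fun u v =>
  inferInstanceAs (Decidable (wheelAdj m u v))

/-!
Every automorphism of the wheel fixes the axis, the only vertex adjacent to all others, so
`Aut (wheel 5) ≅ Aut C₅`. An automorphism of the cycle `C_n` on `ZMod n` (`n ≥ 3`) cannot step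
back, hence is affine, `x ↦ a + x` or `x ↦ a - x`; this identifies `Aut C_n` with the dihedral
group `D_n`, of order `2n`.

The sign of the induced permutation of edges is a character `D₅ → ℤˣ`. It is trivial on
rotations because they have odd order, and trivial on the reflection `x ↦ -x` by a direct count,
hence trivial on all of `D₅`.
-/

open Equiv Function SimpleGraph DihedralGroup

local notation "𝒞" n:max => circulantGraph ({1} : Set (ZMod n))

namespace SimpleGraph.Iso

variable {V W : Type*} {G : SimpleGraph V}

theorem mapEdgeSet_mul (φ ψ : G ≃g G) :
    (φ * ψ).mapEdgeSet = φ.mapEdgeSet * ψ.mapEdgeSet := by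
  ext ⟨e, he⟩
  induction e using Sym2.ind
  rfl

def mapEdgeSetHom : (G ≃g G) →* Perm G.edgeSet where
  toFun := mapEdgeSet
  map_one' := by
    ext ⟨e, he⟩
    induction e using Sym2.ind
    rfl
  map_mul' := mapEdgeSet_mul

theorem adj_of_forall_adj {G' : SimpleGraph W} (φ : G ≃g G') {v : V}
    (hv : ∀ w, w ≠ v → G.Adj v w) {w : W} (hw : w ≠ φ v) : G'.Adj (φ v) w := by
  rw [← φ.apply_symm_apply w, φ.map_rel_iff]
  exact hv _ fun h => hw (by rw [← h, φ.apply_symm_apply])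

end SimpleGraph.Iso

namespace DihedralGroup

variable {n : ℕ}

-- Rotations have odd order and `ℤˣ` has exponent 2.
theorem eq_one_of_apply_sr_zero (hn : Odd n) {f : DihedralGroup n →* ℤˣ}
    (hsr : f (sr 0) = 1) : f = 1 := by
  have hr (i : ZMod n) : f (r i) = 1 := by
    have h : f (r i) ^ n = 1 := by
      rw [← map_pow, r_pow, ZMod.natCast_self, mul_zero, r_zero, map_one]
    rwa [Int.units_pow_eq_pow_mod_two, Nat.odd_iff.mp hn, pow_one] at h
  ext1 g
  cases g with
  | r i => exact hr i
  | sr i => rw [← zero_add i, ← sr_mul_r, map_mul, hsr, hr, one_mul, MonoidHom.one_apply]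

def toPerm (n : ℕ) : DihedralGroup n →* Perm (ZMod n) where
  toFun
    | r i => Equiv.addLeft i
    | sr i => Equiv.subLeft (-i)
  map_one' := by rw [one_def]; ext; simp
  map_mul' := by
    rintro (i | i) (j | j) <;> ext x <;> simp [r_mul_r, r_mul_sr, sr_mul_r, sr_mul_sr] <;> ring

@[simp] lemma toPerm_r (i x : ZMod n) : toPerm n (r i) x = i + x := rfl

@[simp] lemma toPerm_sr (i x : ZMod n) : toPerm n (sr i) x = -i - x := rfl

theorem toPerm_injective (h2 : (2 : ZMod n) ≠ 0) : Injective (toPerm n) := by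
  rintro (i | i) (j | j) h <;> have h0 := DFunLike.congr_fun h 0 <;>
    have h1 := DFunLike.congr_fun h 1 <;>
    simp only [toPerm_r, toPerm_sr, add_zero, sub_zero, neg_inj] at h0 h1
  · rw [h0]
  · exact absurd (by linear_combination h1 - h0) h2
  · exact absurd (by linear_combination h0 - h1) h2
  · rw [h0]

theorem adj_toPerm_iff (g : DihedralGroup n) (x y : ZMod n) :
    (𝒞 n).Adj (toPerm n g x) (toPerm n g y) ↔ (𝒞 n).Adj x y := by
  cases g <;> simp [circulantGraph_adj, or_comm]

def toCycleAut (n : ℕ) : DihedralGroup n →* (𝒞 n ≃g 𝒞 n) where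
  toFun g := ⟨toPerm n g, adj_toPerm_iff g _ _⟩
  map_one' := RelIso.ext fun x => by simp
  map_mul' g h := RelIso.ext fun x => by simp

theorem toCycleAut_injective (h2 : (2 : ZMod n) ≠ 0) : Injective (toCycleAut n) :=
  fun _ _ h => toPerm_injective h2 (congrArg RelIso.toEquiv h)

end DihedralGroup

section CycleAut

variable {n : ℕ} (σ : 𝒞 n ≃g 𝒞 n)

theorem circulantGraph_one_adj_add_one (h2 : (2 : ZMod n) ≠ 0) (x : ZMod n) :
    (𝒞 n).Adj x (x + 1) := by
  have h1 : (1 : ZMod n) ≠ 0 := fun h1 => h2 (by linear_combination 2 * h1)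
  simpa [circulantGraph_adj] using h1

theorem cycleAut_step (h2 : (2 : ZMod n) ≠ 0) (x : ZMod n) :
    σ (x + 1) - σ x = 1 ∨ σ x - σ (x + 1) = 1 := by
  have := σ.map_rel_iff.mpr (circulantGraph_one_adj_add_one h2 x)
  simp only [circulantGraph_adj, Set.mem_singleton_iff] at this
  exact this.2.symm

-- Stepping back would give `σ (x + 2) = σ x`, i.e. `2 = 0`.
theorem cycleAut_step_eq (h2 : (2 : ZMod n) ≠ 0) (x : ZMod n) :
    σ (x + 1 + 1) - σ (x + 1) = σ (x + 1) - σ x := by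
  have hback : σ (x + 1 + 1) ≠ σ x := fun h => h2 <| by
    simpa [add_assoc, one_add_one_eq_two] using σ.injective h
  rcases cycleAut_step σ h2 x with h | h <;> rcases cycleAut_step σ h2 (x + 1) with h' | h'
  · rw [h, h']
  · exact absurd (by linear_combination h - h') hback
  · exact absurd (by linear_combination h' - h) hback
  · linear_combination h - h'

theorem cycleAut_apply [NeZero n] (h2 : (2 : ZMod n) ≠ 0) (x : ZMod n) :
    σ x = σ 0 + (σ 1 - σ 0) * x := by
  have hstep (k : ℕ) : σ (k + 1) - σ k = σ 1 - σ 0 := by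
    induction k with
    | zero => simp
    | succ k ih => rw [Nat.cast_succ, cycleAut_step_eq σ h2, ih]
  have hk (k : ℕ) : σ k = σ 0 + (σ 1 - σ 0) * k := by
    induction k with
    | zero => simp
    | succ k ih => push_cast; linear_combination hstep k + ih
  simpa using hk x.val

theorem DihedralGroup.toCycleAut_surjective [NeZero n] (h2 : (2 : ZMod n) ≠ 0) :
    Surjective (toCycleAut n) := by
  intro σ
  have hd : σ 1 - σ 0 = 1 ∨ σ 1 - σ 0 = -1 := by
    rcases cycleAut_step σ h2 0 with h | h <;> rw [zero_add] at h
    · exact .inl h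
    · exact .inr (by linear_combination -h)
  rcases hd with hd | hd
  · exact ⟨r (σ 0), RelIso.ext fun x => by simp [toCycleAut, cycleAut_apply σ h2 x, hd]⟩
  · refine ⟨sr (-σ 0), RelIso.ext fun x => ?_⟩
    simp [toCycleAut, cycleAut_apply σ h2 x, hd]
    ring

noncomputable def DihedralGroup.cycleAutEquiv (n : ℕ) [NeZero n] (h2 : (2 : ZMod n) ≠ 0) :
    DihedralGroup n ≃* (𝒞 n ≃g 𝒞 n) :=
  MulEquiv.ofBijective (toCycleAut n) ⟨toCycleAut_injective h2, toCycleAut_surjective h2⟩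

end CycleAut

section OptionAut

variable {α : Type*} {G : SimpleGraph (Option α)} {H : SimpleGraph α}

theorem optionAut_apply_none (hnone : ∀ a, G.Adj none (some a))
    (hsome : ∀ a b, G.Adj (some a) (some b) ↔ H.Adj a b)
    (hH : ∀ a, ∃ b, b ≠ a ∧ ¬ H.Adj a b) (ψ : G ≃g G) : ψ none = none := by
  by_contra! h
  obtain ⟨a, ha⟩ := Option.ne_none_iff_exists'.mp h
  obtain ⟨b, hba, hab⟩ := hH a
  have haxis (w : Option α) (hw : w ≠ none) : G.Adj none w := by
    obtain ⟨c, rfl⟩ := Option.ne_none_iff_exists'.mp hw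
    exact hnone c
  have hb : some b ≠ ψ none := by
    rw [ha]
    exact Option.some_injective _ |>.ne hba
  have := ψ.adj_of_forall_adj haxis hb
  rw [ha, hsome] at this
  exact hab this

variable (hnone : ∀ a, G.Adj none (some a))
  (hsome : ∀ a b, G.Adj (some a) (some b) ↔ H.Adj a b)

def optionAutHom : (H ≃g H) →* (G ≃g G) where
  toFun φ := ⟨φ.toEquiv.optionCongr, by
    rintro (_ | a) (_ | b) <;> simp [hnone, hsome, G.adj_comm _ none, φ.map_adj_iff]⟩
  map_one' := RelIso.ext fun u => by cases u <;> rfl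
  map_mul' _ _ := RelIso.ext fun u => by cases u <;> rfl

theorem optionAutHom_injective : Injective (optionAutHom hnone hsome) := fun _ _ h =>
  RelIso.toEquiv_injective (optionCongr_injective (congrArg RelIso.toEquiv h))

theorem optionAutHom_surjective (hH : ∀ a, ∃ b, b ≠ a ∧ ¬ H.Adj a b) :
    Surjective (optionAutHom hnone hsome) := by
  intro ψ
  have hψ := optionAut_apply_none hnone hsome hH ψ
  set σ := removeNone ψ.toEquiv
  have hσ (a : α) : ψ (some a) = some (σ a) := by
    refine (removeNone_some _ (Option.ne_none_iff_exists'.mp fun h => ?_)).symm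
    exact Option.some_ne_none a (ψ.injective (h.trans hψ.symm))
  refine ⟨⟨σ, fun {a b} => ?_⟩, RelIso.ext fun u => ?_⟩
  · rw [← hsome, ← hσ, ← hσ, ψ.map_adj_iff, hsome]
  · cases u <;> simp [optionAutHom, hψ, hσ]

noncomputable def optionAutEquiv (hH : ∀ a, ∃ b, b ≠ a ∧ ¬ H.Adj a b) :
    (H ≃g H) ≃* (G ≃g G) :=
  MulEquiv.ofBijective (optionAutHom hnone hsome)
    ⟨optionAutHom_injective hnone hsome, optionAutHom_surjective hnone hsome hH⟩

end OptionAut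

-- `ZMod 5` unfolds to `Fin 5`, so it labels the rim of `wheel 5`.
theorem wheel_five_adj_some_iff (a b : ZMod 5) :
    (wheel 5).Adj (some a) (some b) ↔ (𝒞 5).Adj a b := by
  simp only [circulantGraph_adj, Set.mem_singleton_iff]
  exact (by decide : ∀ a b : Fin 5,
    (wheel 5).Adj (some a) (some b) ↔ a ≠ b ∧ (a - b = 1 ∨ b - a = 1)) a b

theorem cycle_five_exists_not_adj (a : ZMod 5) : ∃ b, b ≠ a ∧ ¬ (𝒞 5).Adj a b := by
  simp only [circulantGraph_adj, Set.mem_singleton_iff]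
  revert a
  decide

noncomputable def wheelFiveAutEquiv : DihedralGroup 5 ≃* (wheel 5 ≃g wheel 5) :=
  (cycleAutEquiv 5 (by decide)).trans
    (optionAutEquiv (fun _ => trivial) wheel_five_adj_some_iff cycle_five_exists_not_adj)

-- `x ↦ -x` fixes the spoke at `0` and the rim edge `{2, 3}` and swaps the other eight edges in
-- four pairs.
set_option maxRecDepth 10000 in
theorem sign_mapEdgeSet_wheelFiveAutEquiv_sr_zero :
    Perm.sign (wheelFiveAutEquiv (sr 0)).mapEdgeSet = 1 := by
  decide

/-- The pentagon-wheel graph (5 rim vertices in a cycle joined to a common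
axis; 6 vertices, 10 edges) is not a zero graph: its automorphism group is the dihedral
group of order 10, and every automorphism induces an even permutation of the 10 edges,
so no automorphism induces an odd one. -/
theorem pentagon_wheel_nonzero :
    Nat.card (wheel 5 ≃g wheel 5) = 10 ∧
    (∀ φ : wheel 5 ≃g wheel 5,
      Equiv.Perm.sign (SimpleGraph.Iso.mapEdgeSet φ) = 1) ∧
    ¬ ∃ φ : wheel 5 ≃g wheel 5,
      Equiv.Perm.sign (SimpleGraph.Iso.mapEdgeSet φ) = -1 := by
  have hsign (φ : wheel 5 ≃g wheel 5) : Perm.sign φ.mapEdgeSet = 1 := by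
    obtain ⟨g, rfl⟩ := wheelFiveAutEquiv.surjective φ
    have hchar := eq_one_of_apply_sr_zero (by decide)
      (f := Perm.sign.comp (Iso.mapEdgeSetHom.comp wheelFiveAutEquiv.toMonoidHom))
      (by exact sign_mapEdgeSet_wheelFiveAutEquiv_sr_zero)
    exact DFunLike.congr_fun hchar g
  refine ⟨?_, hsign, fun ⟨φ, h⟩ => ?_⟩
  · rw [← Nat.card_congr wheelFiveAutEquiv.toEquiv, DihedralGroup.nat_card]
  · rw [hsign φ] at h
    exact absurd h (by decide)
end
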